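/- arXiv:2104.07947 — 2 statements merged into one kernel-verified Lean document; each statement's English description precedes it below -/
import Mathlib

section
/- Let α ∈ (1,2) and let σ : ℝ → (0,∞) be continuous. If δ := sup_{x>0} x^{α-1} ∫_{ℝ∖(-x,x)} σ(y)^{-α} dy < ∞, then for every y > 0, ∫_{ℝ∖(-y,y)} |z|^{(α-1)/2} σ(z)^{-α} dz ≤ 2δ y^{-(α-1)/2}. -/
open MeasureTheory Set

/-!
Layer cake: on `{y ≤ |z|}` write `|z| ^ β = ∫₀^{|z|} β t^(β-1) dt`, so that the weighted
integral becomes `∫₀^∞ β t^(β-1) · T(max t y) dt`, where `T(x) ≤ δ x^(-(α-1))` is the tail mass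
of the weight `σ^(-α)`. Splitting at `t = y`, the two pieces contribute `δ y^(-(α-1)/2)` each
when `β = (α - 1)/2`.
-/

lemma integral_mul_rpow_sub_one {β : ℝ} (hβ : 0 < β) (x : ℝ) :
    ∫ t in (0 : ℝ)..x, β * t ^ (β - 1) = x ^ β := by
  rw [intervalIntegral.integral_const_mul, integral_rpow (Or.inl (by linarith)), sub_add_cancel,
    Real.zero_rpow hβ.ne', sub_zero, mul_div_cancel₀ _ hβ.ne']

lemma intervalIntegrable_mul_rpow_sub_one {β : ℝ} (hβ : 0 < β) (a b : ℝ) :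
    IntervalIntegrable (fun t => β * t ^ (β - 1)) volume a b :=
  (intervalIntegral.intervalIntegrable_rpow' (by linarith)).const_mul β

lemma lintegral_Ioi_max_rpow_neg_mul {p β y : ℝ} (hβ : 0 < β) (hβp : β < p) (hy : 0 < y) :
    ∫⁻ t in Ioi 0, ENNReal.ofReal (max t y ^ (-p)) * ENNReal.ofReal (β * t ^ (β - 1)) =
      ENNReal.ofReal (p / (p - β) * y ^ (β - p)) := by
  have hpβ : 0 < p - β := by linarith
  have near : ∫⁻ t in Ioc 0 y, ENNReal.ofReal (max t y ^ (-p)) *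
      ENNReal.ofReal (β * t ^ (β - 1)) = ENNReal.ofReal (y ^ (-p) * y ^ β) := by
    rw [setLIntegral_congr_fun measurableSet_Ioc fun t ht => by rw [max_eq_right ht.2],
      lintegral_const_mul' _ _ ENNReal.ofReal_ne_top,
      ← ofReal_integral_eq_lintegral_ofReal
        ((intervalIntegrable_mul_rpow_sub_one hβ 0 y).1)
        (ae_restrict_of_forall_mem measurableSet_Ioc fun t ht => by
          have : 0 < t := ht.1
          positivity),
      ← intervalIntegral.integral_of_le hy.le, integral_mul_rpow_sub_one hβ,
      ← ENNReal.ofReal_mul (by positivity)]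
  have far : ∫⁻ t in Ioi y, ENNReal.ofReal (max t y ^ (-p)) *
      ENNReal.ofReal (β * t ^ (β - 1)) = ENNReal.ofReal (β / (p - β) * y ^ (β - p)) := by
    have hexp : β - p - 1 < -1 := by linarith
    rw [setLIntegral_congr_fun measurableSet_Ioi fun t (ht : y < t) => by
        have ht0 : 0 < t := hy.trans ht
        rw [max_eq_left ht.le, ← ENNReal.ofReal_mul (by positivity), mul_left_comm,
          ← Real.rpow_add ht0, show -p + (β - 1) = β - p - 1 by ring],
      ← ofReal_integral_eq_lintegral_ofReal
        ((integrableOn_Ioi_rpow_of_lt hexp hy).const_mul β)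
        (ae_restrict_of_forall_mem measurableSet_Ioi fun t (ht : y < t) => by
          have : 0 < t := hy.trans ht
          positivity),
      integral_const_mul, integral_Ioi_rpow_of_lt hexp hy, sub_add_cancel]
    have : β - p ≠ 0 := by linarith
    congr 1
    field_simp
    ring
  rw [← Ioc_union_Ioi_eq_Ioi hy.le, lintegral_union measurableSet_Ioi Ioc_disjoint_Ioi_same,
    near, far, ← ENNReal.ofReal_add (by positivity) (by positivity)]
  congr 1
  rw [← Real.rpow_add hy, show -p + β = β - p by ring]
  field_simp
  ring

theorem setLIntegral_rpow_le_of_meas_le_rpow_neg {X : Type*} [MeasurableSpace X]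
    {μ : Measure X} {φ : X → ℝ} (hφ : Measurable φ) {C p β : ℝ} (hβ : 0 < β) (hβp : β < p)
    (htail : ∀ x > 0, μ {a | x ≤ φ a} ≤ ENNReal.ofReal (C * x ^ (-p))) {y : ℝ} (hy : 0 < y) :
    ∫⁻ a in {a | y ≤ φ a}, ENNReal.ofReal (φ a ^ β) ∂μ ≤
      ENNReal.ofReal (C * (p / (p - β) * y ^ (β - p))) := by
  set S := {a | y ≤ φ a}
  have hS : MeasurableSet S := measurableSet_le measurable_const hφ
  have hcut : ∀ t, {a | t ≤ φ a} ∩ S = {a | max t y ≤ φ a} := fun t => by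
    ext a; simp [S]
  calc ∫⁻ a in S, ENNReal.ofReal (φ a ^ β) ∂μ
      = ∫⁻ a in S, ENNReal.ofReal (∫ t in (0 : ℝ)..φ a, β * t ^ (β - 1)) ∂μ := by
        simp_rw [integral_mul_rpow_sub_one hβ]
    _ = ∫⁻ t in Ioi 0, μ.restrict S {a | t ≤ φ a} * ENNReal.ofReal (β * t ^ (β - 1)) :=
        lintegral_comp_eq_lintegral_meas_le_mul _
          (ae_restrict_of_forall_mem hS fun a ha => hy.le.trans ha) hφ.aemeasurable
          (fun t _ => intervalIntegrable_mul_rpow_sub_one hβ 0 t)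
          (ae_restrict_of_forall_mem measurableSet_Ioi fun t ht => by
            have : (0 : ℝ) < t := ht
            positivity)
    _ ≤ ∫⁻ t in Ioi 0, ENNReal.ofReal (C * max t y ^ (-p)) *
          ENNReal.ofReal (β * t ^ (β - 1)) := by
        refine setLIntegral_mono' measurableSet_Ioi fun t ht => ?_
        rw [Measure.restrict_apply' hS, hcut]
        gcongr
        exact htail _ (lt_max_of_lt_right hy)
    _ = ENNReal.ofReal C * ∫⁻ t in Ioi 0, ENNReal.ofReal (max t y ^ (-p)) *
          ENNReal.ofReal (β * t ^ (β - 1)) := by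
        rw [← lintegral_const_mul' _ _ ENNReal.ofReal_ne_top]
        refine setLIntegral_congr_fun measurableSet_Ioi fun t _ => ?_
        rw [ENNReal.ofReal_mul' (Real.rpow_nonneg (hy.le.trans (le_max_right t y)) _), mul_assoc]
    _ = ENNReal.ofReal (C * (p / (p - β) * y ^ (β - p))) := by
        rw [lintegral_Ioi_max_rpow_neg_mul hβ hβp hy, ← ENNReal.ofReal_mul']
        have : 0 < p := by linarith
        have : 0 < p - β := by linarith
        positivity

lemma le_ofReal_mul_rpow_neg_of_ofReal_rpow_mul_le {m : ENNReal} {x p δ : ℝ} (hx : 0 < x)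
    (h : ENNReal.ofReal (x ^ p) * m ≤ ENNReal.ofReal δ) : m ≤ ENNReal.ofReal (δ * x ^ (-p)) := by
  have hxp : 0 < x ^ p := Real.rpow_pos_of_pos hx p
  rw [Real.rpow_neg hx.le, ← div_eq_mul_inv, ENNReal.ofReal_div_of_pos hxp,
    ENNReal.le_div_iff_mul_le (Or.inl (ENNReal.ofReal_pos.mpr hxp).ne')
      (Or.inl ENNReal.ofReal_ne_top), mul_comm]
  exact h

lemma compl_Ioo_neg_eq (x : ℝ) : (Ioo (-x) x)ᶜ = {z | x ≤ |z|} := by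
  ext z
  simp only [mem_compl_iff, mem_Ioo, not_and_or, not_lt, mem_ofPred_eq, le_abs']

theorem stmt2_general (α δ : ℝ) (hα1 : 1 < α)
    (σ : ℝ → ℝ) (hσc : Continuous σ)
    (hδ : ∀ x : ℝ, 0 < x →
      ENNReal.ofReal (x ^ (α - 1)) *
        ∫⁻ z in (Set.Ioo (-x) x)ᶜ, ENNReal.ofReal ((σ z) ^ (-α)) ≤
          ENNReal.ofReal δ) :
    ∀ y : ℝ, 0 < y →
      ∫⁻ z in (Set.Ioo (-y) y)ᶜ,
          ENNReal.ofReal (|z| ^ ((α - 1) / 2) * (σ z) ^ (-α)) ≤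
        ENNReal.ofReal (2 * δ * y ^ (-((α - 1) / 2))) := by
  intro y hy
  set w : ℝ → ENNReal := fun z => ENNReal.ofReal (σ z ^ (-α))
  have hw : Measurable w := (hσc.measurable.pow_const (-α)).ennreal_ofReal
  have hS : ∀ x : ℝ, MeasurableSet {z : ℝ | x ≤ |z|} :=
    fun x => measurableSet_le measurable_const measurable_abs
  have htail : ∀ x > 0, volume.withDensity w {z | x ≤ |z|} ≤
      ENNReal.ofReal (δ * x ^ (-(α - 1))) := fun x hx => by
    rw [withDensity_apply _ (hS x), ← compl_Ioo_neg_eq]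
    exact le_ofReal_mul_rpow_neg_of_ofReal_rpow_mul_le hx (hδ x hx)
  have key := setLIntegral_rpow_le_of_meas_le_rpow_neg measurable_abs
    (by linarith : 0 < (α - 1) / 2) (by linarith : (α - 1) / 2 < α - 1) htail hy
  rw [setLIntegral_withDensity_eq_setLIntegral_mul _ hw (by fun_prop) (hS y)] at key
  convert key using 1
  · rw [compl_Ioo_neg_eq]
    refine setLIntegral_congr_fun (hS y) fun z _ => ?_
    rw [Pi.mul_apply, ENNReal.ofReal_mul (by positivity), mul_comm]
  · have : α - 1 ≠ 0 := by linarith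
    rw [show (α - 1) / (α - 1 - (α - 1) / 2) = 2 by field_simp; ring,
      show (α - 1) / 2 - (α - 1) = -((α - 1) / 2) by ring, mul_comm 2 δ, mul_assoc]

theorem stmt2 (α δ : ℝ) (hα1 : 1 < α) (hα2 : α < 2)
    (σ : ℝ → ℝ) (hσc : Continuous σ) (hσ : ∀ x, 0 < σ x)
    (hδ : ∀ x : ℝ, 0 < x →
      ENNReal.ofReal (x ^ (α - 1)) *
        ∫⁻ z in (Set.Ioo (-x) x)ᶜ, ENNReal.ofReal ((σ z) ^ (-α)) ≤
          ENNReal.ofReal δ) :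
    ∀ y : ℝ, 0 < y →
      ∫⁻ z in (Set.Ioo (-y) y)ᶜ,
          ENNReal.ofReal (|z| ^ ((α - 1) / 2) * (σ z) ^ (-α)) ≤
        ENNReal.ofReal (2 * δ * y ^ (-((α - 1) / 2))) :=
  stmt2_general α δ hα1 σ hσc hδ
end

section
/- Let α ∈ (1,2) and let σ : (0,∞) → (0,∞) be measurable with δ₊ := sup_{x>0} x^{α-1} ∫_x^∞ σ(z)^{-α} dz < ∞. Then for φ(x) = x^{(α-1)/2} and every x > 0: (1/φ(x)) ∫_0^x z^{α-2} (∫_z^∞ φ(y) σ(y)^{-α} dy) dz ≤ 4δ₊/(α-1). -/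
open MeasureTheory Set
open scoped ENNReal

/-! Write `β = (α - 1) / 2` and `g = σ ^ (-α)`, so that `∫_t^∞ g ≤ δ t^(-2β)`. By the layer-cake
formula for the measure `g(y) dy` on `(z, ∞)`,
`∫_z^∞ y^β g(y) dy = β ∫_0^∞ t^(β-1) (∫_{max t z}^∞ g) dt`, which is at most
`δ z^(-β) + δ β ∫_z^∞ t^(-β-1) dt = 2δ z^(-β)`.
Hence the integrand of the outer integral is at most `2δ z^(β-1)`, whose integral over `(0, x)` is
`2δ x^β / β = 4δ x^β / (α - 1)`. -/

lemma lintegral_Ioc_zero_rpow {s z : ℝ} (hs : -1 < s) (hz : 0 ≤ z) :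
    ∫⁻ t in Ioc 0 z, ENNReal.ofReal (t ^ s) = ENNReal.ofReal (z ^ (s + 1) / (s + 1)) := by
  have hint : IntegrableOn (fun t : ℝ ↦ t ^ s) (Ioc 0 z) :=
    (intervalIntegrable_iff_integrableOn_Ioc_of_le hz).1
      (intervalIntegral.intervalIntegrable_rpow' hs)
  rw [← ofReal_integral_eq_lintegral_ofReal hint
    (ae_restrict_of_forall_mem measurableSet_Ioc fun t ht ↦ Real.rpow_nonneg ht.1.le s),
    ← intervalIntegral.integral_of_le hz, integral_rpow (Or.inl hs),
    Real.zero_rpow (by linarith), sub_zero]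

lemma lintegral_Ioi_rpow {s z : ℝ} (hs : s < -1) (hz : 0 < z) :
    ∫⁻ t in Ioi z, ENNReal.ofReal (t ^ s) = ENNReal.ofReal (-z ^ (s + 1) / (s + 1)) := by
  rw [← ofReal_integral_eq_lintegral_ofReal (integrableOn_Ioi_rpow_of_lt hs hz)
    (ae_restrict_of_forall_mem measurableSet_Ioi fun t ht ↦ Real.rpow_nonneg (hz.trans ht).le s),
    integral_Ioi_rpow_of_lt hs hz]

lemma lintegral_Ioi_rpow_mul_le_of_tail_le {g : ℝ → ℝ≥0∞} {z C p β : ℝ} (hz : 0 < z)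
    (hC : 0 ≤ C) (hβ : 0 < β) (hβp : β < p) (hg : AEMeasurable g (volume.restrict (Ioi z)))
    (htail : ∀ t, z ≤ t → ∫⁻ y in Ioi t, g y ≤ ENNReal.ofReal (C * t ^ (-p))) :
    ∫⁻ y in Ioi z, ENNReal.ofReal (y ^ β) * g y ≤
      ENNReal.ofReal (p / (p - β) * C * z ^ (β - p)) := by
  set ν := (volume.restrict (Ioi z)).withDensity g
  have hν : ∀ t, ν {y | t < y} ≤ ENNReal.ofReal (C * max t z ^ (-p)) := fun t ↦ by
    rw [show {y | t < y} = Ioi t from rfl, withDensity_apply _ measurableSet_Ioi,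
      Measure.restrict_restrict measurableSet_Ioi, Ioi_inter_Ioi]
    exact htail _ (le_max_right t z)
  have hν_nonneg : ∀ᵐ y ∂ν, 0 ≤ y := withDensity_absolutelyContinuous _ _
    (ae_restrict_of_forall_mem measurableSet_Ioi fun y hy ↦ (hz.trans hy).le)
  have hlayer : ∫⁻ y in Ioi z, ENNReal.ofReal (y ^ β) * g y =
      ENNReal.ofReal β * ∫⁻ t in Ioi 0, ν {y | t < y} * ENNReal.ofReal (t ^ (β - 1)) := by
    rw [← lintegral_rpow_eq_lintegral_meas_lt_mul ν hν_nonneg aemeasurable_id hβ,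
      lintegral_withDensity_eq_lintegral_mul₀ hg (by fun_prop)]
    simp only [Pi.mul_apply, mul_comm]
  have hnear : ∫⁻ t in Ioc 0 z, ν {y | t < y} * ENNReal.ofReal (t ^ (β - 1)) ≤
      ENNReal.ofReal (C * z ^ (-p)) * ENNReal.ofReal (z ^ β / β) := by
    calc _ ≤ ∫⁻ t in Ioc 0 z, ENNReal.ofReal (C * z ^ (-p)) * ENNReal.ofReal (t ^ (β - 1)) := by
          refine setLIntegral_mono' measurableSet_Ioc fun t ht ↦ ?_
          gcongr
          simpa [max_eq_right ht.2] using hν t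
      _ = _ := by
          rw [lintegral_const_mul _ (by fun_prop), lintegral_Ioc_zero_rpow (by linarith) hz.le,
            sub_add_cancel]
  have hfar : ∫⁻ t in Ioi z, ν {y | t < y} * ENNReal.ofReal (t ^ (β - 1)) ≤
      ENNReal.ofReal C * ENNReal.ofReal (z ^ (β - p) / (p - β)) := by
    calc _ ≤ ∫⁻ t in Ioi z, ENNReal.ofReal C * ENNReal.ofReal (t ^ (β - p - 1)) := by
          refine setLIntegral_mono' measurableSet_Ioi fun t ht ↦ ?_
          have ht0 : 0 < t := hz.trans ht
          rw [← ENNReal.ofReal_mul hC, show β - p - 1 = -p + (β - 1) by ring,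
            Real.rpow_add ht0, ← mul_assoc, ENNReal.ofReal_mul (by positivity)]
          gcongr
          simpa [max_eq_left (mem_Ioi.1 ht).le] using hν t
      _ = _ := by
          rw [lintegral_const_mul _ (by fun_prop), lintegral_Ioi_rpow (by linarith) hz]
          congr 2
          rw [show β - p - 1 + 1 = β - p by ring, neg_div, ← div_neg, neg_sub]
  rw [hlayer, ← Ioc_union_Ioi_eq_Ioi hz.le,
    lintegral_union measurableSet_Ioi Ioc_disjoint_Ioi_same]
  calc _ ≤ ENNReal.ofReal β * (ENNReal.ofReal (C * z ^ (-p)) * ENNReal.ofReal (z ^ β / β) +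
        ENNReal.ofReal C * ENNReal.ofReal (z ^ (β - p) / (p - β))) := by gcongr
    _ = _ := by
      have hzβ := Real.rpow_pos_of_pos hz β
      have hzp := Real.rpow_pos_of_pos hz (-p)
      have hpβ : 0 < p - β := by linarith
      rw [← ENNReal.ofReal_mul (by positivity), ← ENNReal.ofReal_mul hC,
        ← ENNReal.ofReal_add (by positivity) (by positivity), ← ENNReal.ofReal_mul hβ.le]
      congr 1
      rw [sub_eq_add_neg, Real.rpow_add hz]
      field_simp
      ring

lemma setIntegral_Ioi_rpow_mul_le_of_tail_le {g : ℝ → ℝ} {z C p β : ℝ} (hz : 0 < z)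
    (hβ : 0 < β) (hβp : β < p) (hg_nonneg : ∀ y, z < y → 0 ≤ g y)
    (hg : ∀ t, z ≤ t → IntegrableOn g (Ioi t))
    (htail : ∀ t, z ≤ t → t ^ p * ∫ y in Ioi t, g y ≤ C) :
    ∫ y in Ioi z, y ^ β * g y ≤ p / (p - β) * C * z ^ (β - p) := by
  have htail' : ∀ t, z ≤ t → ∫ y in Ioi t, g y ≤ C * t ^ (-p) := fun t ht ↦ by
    have htp := Real.rpow_pos_of_pos (hz.trans_le ht) p
    rw [Real.rpow_neg (hz.trans_le ht).le, ← div_eq_mul_inv, le_div_iff₀ htp, mul_comm]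
    exact htail t ht
  have hC : 0 ≤ C := (mul_nonneg (Real.rpow_nonneg hz.le p)
    (setIntegral_nonneg (μ := volume) measurableSet_Ioi hg_nonneg)).trans (htail z le_rfl)
  have hlint : ∫⁻ y in Ioi z, ENNReal.ofReal (y ^ β * g y) ≤
      ENNReal.ofReal (p / (p - β) * C * z ^ (β - p)) := by
    rw [setLIntegral_congr_fun measurableSet_Ioi fun y hy ↦
      ENNReal.ofReal_mul (Real.rpow_nonneg (hz.trans hy).le β)]
    refine lintegral_Ioi_rpow_mul_le_of_tail_le hz hC hβ hβp
      (hg z le_rfl).aemeasurable.ennreal_ofReal fun t ht ↦ ?_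
    rw [← ofReal_integral_eq_lintegral_ofReal (hg t ht)
      (ae_restrict_of_forall_mem measurableSet_Ioi fun y hy ↦ hg_nonneg y (ht.trans_lt hy))]
    exact ENNReal.ofReal_le_ofReal (htail' t ht)
  rw [integral_eq_lintegral_of_nonneg_ae
    (ae_restrict_of_forall_mem measurableSet_Ioi fun y hy ↦
      mul_nonneg (Real.rpow_nonneg (hz.trans hy).le β) (hg_nonneg y hy))
    ((Real.continuous_rpow_const hβ.le).aestronglyMeasurable.mul
      (hg z le_rfl).aestronglyMeasurable)]
  have hp : 0 < p := hβ.trans hβp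
  have hpβ : 0 < p - β := by linarith
  exact ENNReal.toReal_le_of_le_ofReal (by positivity) hlint

lemma setIntegral_Ioo_zero_le_of_le_rpow {f : ℝ → ℝ} {K s x : ℝ} (hx : 0 < x) (hs : -1 < s)
    (hf_nonneg : ∀ z ∈ Ioo 0 x, 0 ≤ f z) (hf : ∀ z ∈ Ioo 0 x, f z ≤ K * z ^ s) :
    ∫ z in Ioo 0 x, f z ≤ K * (x ^ (s + 1) / (s + 1)) := by
  have hint : IntegrableOn (fun z : ℝ ↦ K * z ^ s) (Ioo 0 x) :=
    (intervalIntegrable_iff_integrableOn_Ioo_of_le hx.le).1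
      ((intervalIntegral.intervalIntegrable_rpow' hs).const_mul K)
  calc ∫ z in Ioo 0 x, f z ≤ ∫ z in Ioo 0 x, K * z ^ s :=
        integral_mono_of_nonneg (ae_restrict_of_forall_mem measurableSet_Ioo hf_nonneg) hint
          (ae_restrict_of_forall_mem measurableSet_Ioo hf)
    _ = K * (x ^ (s + 1) / (s + 1)) := by
        rw [← integral_Ioc_eq_integral_Ioo, ← intervalIntegral.integral_of_le hx.le,
          intervalIntegral.integral_const_mul, integral_rpow (Or.inl hs),
          Real.zero_rpow (by linarith), sub_zero]

theorem stmt19_general (α δ : ℝ) (hα1 : 1 < α)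
    (σ : ℝ → ℝ) (hσ : ∀ x, 0 < x → 0 < σ x)
    (hfin : ∀ x : ℝ, 0 < x → IntegrableOn (fun z => (σ z) ^ (-α)) (Set.Ioi x))
    (hδ : ∀ x : ℝ, 0 < x →
      x ^ (α - 1) * (∫ z in Set.Ioi x, (σ z) ^ (-α)) ≤ δ) :
    ∀ x : ℝ, 0 < x →
      (1 / x ^ ((α - 1) / 2)) *
          ∫ z in Set.Ioo (0 : ℝ) x,
            z ^ (α - 2) * (∫ y in Set.Ioi z, y ^ ((α - 1) / 2) * (σ y) ^ (-α)) ≤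
        4 * δ / (α - 1) := by
  intro x hx
  set β := (α - 1) / 2 with hβ_def
  have hβ : 0 < β := by linarith
  have hinner : ∀ z, 0 < z → ∫ y in Ioi z, y ^ β * σ y ^ (-α) ≤ 2 * δ * z ^ (-β) := by
    intro z hz
    convert setIntegral_Ioi_rpow_mul_le_of_tail_le hz hβ (by linarith : β < α - 1)
      (fun y hy ↦ (Real.rpow_pos_of_pos (hσ y (hz.trans hy)) _).le)
      (fun t ht ↦ hfin t (hz.trans_le ht)) (fun t ht ↦ hδ t (hz.trans_le ht)) using 2
    · have : α - 1 ≠ 0 := by linarith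
      rw [hβ_def]; field_simp; ring
    · rw [hβ_def]; ring_nf
  have hbound : ∀ z ∈ Ioo 0 x,
      z ^ (α - 2) * ∫ y in Ioi z, y ^ β * σ y ^ (-α) ≤ 2 * δ * z ^ (β - 1) := by
    intro z hz
    have := mul_le_mul_of_nonneg_left (hinner z hz.1) (Real.rpow_nonneg hz.1.le (α - 2))
    rwa [mul_left_comm, ← Real.rpow_add hz.1, show α - 2 + -β = β - 1 by rw [hβ_def]; ring]
      at this
  have hintegral := setIntegral_Ioo_zero_le_of_le_rpow hx (by linarith : -1 < β - 1)
    (fun z hz ↦ mul_nonneg (Real.rpow_nonneg hz.1.le _) (setIntegral_nonneg measurableSet_Ioi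
      fun y hy ↦ mul_nonneg (Real.rpow_nonneg (hz.1.trans hy).le _)
        (Real.rpow_pos_of_pos (hσ y (hz.1.trans hy)) _).le)) hbound
  calc _ ≤ 1 / x ^ β * (2 * δ * (x ^ (β - 1 + 1) / (β - 1 + 1))) := by gcongr
    _ = 4 * δ / (α - 1) := by
      have hxβ := Real.rpow_pos_of_pos hx β
      rw [sub_add_cancel, hβ_def]
      field_simp
      ring

theorem stmt19 (α δ : ℝ) (hα1 : 1 < α) (hα2 : α < 2)
    (σ : ℝ → ℝ) (hσm : Measurable σ) (hσ : ∀ x, 0 < x → 0 < σ x)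
    (hfin : ∀ x : ℝ, 0 < x → IntegrableOn (fun z => (σ z) ^ (-α)) (Set.Ioi x))
    (hδ : ∀ x : ℝ, 0 < x →
      x ^ (α - 1) * (∫ z in Set.Ioi x, (σ z) ^ (-α)) ≤ δ) :
    ∀ x : ℝ, 0 < x →
      (1 / x ^ ((α - 1) / 2)) *
          ∫ z in Set.Ioo (0 : ℝ) x,
            z ^ (α - 2) * (∫ y in Set.Ioi z, y ^ ((α - 1) / 2) * (σ y) ^ (-α)) ≤
        4 * δ / (α - 1) :=
  stmt19_general α δ hα1 σ hσ hfin hδ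
end
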